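/- arXiv:2503.08171 — 7 statements merged into one kernel-verified Lean document; each statement's English description precedes it below -/
import Mathlib

section
/- Let 0 < q < 1, x_T ≥ 1 a fixed natural number, and let S : ℕ → ℝ satisfy S(t) = 1 for t ≤ x_T and S(t) = S(t-1) - q^{x_T}(1-q)·S(t - x_T - 1) for t > x_T. Then there exist constants C > 0 and λ ∈ (0,1) with λ ≥ 1 - q^{x_T}(1-q) such that S(t) ≤ C·λ^t for all t, i.e. S decays exponentially. -/
/-!
By strong induction, `S` stays positive and never drops by more than the factor `q` in one
step: chaining `x_T` such steps gives `q ^ x_T * S t ≤ S (t + x_T)`, which bounds the subtracted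
term of the recurrence by `(1 - q) * S (t + x_T)`. Positivity then makes `S` nonincreasing, so
`S t ≥ S (t + x_T)` and every step past `x_T` contracts `S` by the factor `1 - q ^ x_T * (1 - q)`.
-/

lemma pow_mul_le_of_forall_mul_le {f : ℕ → ℝ} {q : ℝ} (hq : 0 ≤ q) {a k : ℕ}
    (h : ∀ j < k, q * f (a + j) ≤ f (a + j + 1)) : q ^ k * f a ≤ f (a + k) := by
  induction k with
  | zero => simp
  | succ k ih =>
    calc q ^ (k + 1) * f a = q * (q ^ k * f a) := by ring
      _ ≤ q * f (a + k) := mul_le_mul_of_nonneg_left (ih fun j hj => h j (by omega)) hq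
      _ ≤ f (a + (k + 1)) := h k (by omega)

lemma le_pow_sub_of_succ_le_mul {f : ℕ → ℝ} {r : ℝ} (hr : 0 ≤ r) {d : ℕ}
    (hinit : ∀ n ≤ d, f n ≤ 1) (hstep : ∀ n, d ≤ n → f (n + 1) ≤ r * f n) (n : ℕ) :
    f n ≤ r ^ (n - d) := by
  induction n with
  | zero => simpa using hinit 0 (Nat.zero_le d)
  | succ n ih =>
    by_cases hn : n + 1 ≤ d
    · simpa [Nat.sub_eq_zero_of_le hn] using hinit (n + 1) hn
    · calc f (n + 1) ≤ r * f n := hstep n (by omega)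
        _ ≤ r * r ^ (n - d) := mul_le_mul_of_nonneg_left ih hr
        _ = r ^ (n + 1 - d) := by rw [← pow_succ', show n + 1 - d = n - d + 1 by omega]

lemma pow_sub_le_inv_pow_mul_pow {r : ℝ} (hr0 : 0 < r) (hr1 : r ≤ 1) (n d : ℕ) :
    r ^ (n - d) ≤ (r ^ d)⁻¹ * r ^ n := by
  rw [le_inv_mul_iff₀ (pow_pos hr0 d), ← pow_add]
  exact pow_le_pow_of_le_one hr0.le hr1 (by omega)

section SisyphusRecurrence

variable {q : ℝ} {d : ℕ} {S : ℕ → ℝ}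

lemma pos_and_mul_le_succ (hq0 : 0 < q) (hq1 : q ≤ 1) (hinit : ∀ t ≤ d, S t = 1)
    (hstep : ∀ n, S (n + d + 1) = S (n + d) - q ^ d * (1 - q) * S n) (n : ℕ) :
    0 < S n ∧ q * S n ≤ S (n + 1) := by
  induction n using Nat.strong_induction_on with
  | _ n ih =>
    have hpos : 0 < S n := by
      rcases n with _ | m
      · rw [hinit 0 (Nat.zero_le d)]
        exact one_pos
      · obtain ⟨hm, hsucc⟩ := ih m (by omega)
        exact (mul_pos hq0 hm).trans_le hsucc
    refine ⟨hpos, ?_⟩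
    by_cases hn : n + 1 ≤ d
    · rw [hinit n (by omega), hinit (n + 1) hn, mul_one]
      exact hq1
    · obtain ⟨m, rfl⟩ : ∃ m, n = m + d := ⟨n - d, by omega⟩
      have hchain : q ^ d * S m ≤ S (m + d) :=
        pow_mul_le_of_forall_mul_le hq0.le fun j hj => (ih (m + j) (by omega)).2
      have := mul_le_mul_of_nonneg_left hchain (sub_nonneg.2 hq1)
      rw [hstep m]
      linarith

lemma antitone_of_recurrence (hq0 : 0 < q) (hq1 : q ≤ 1) (hinit : ∀ t ≤ d, S t = 1)
    (hstep : ∀ n, S (n + d + 1) = S (n + d) - q ^ d * (1 - q) * S n) : Antitone S := by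
  refine antitone_nat_of_succ_le fun n => ?_
  by_cases hn : n + 1 ≤ d
  · rw [hinit n (by omega), hinit (n + 1) hn]
  · obtain ⟨m, rfl⟩ : ∃ m, n = m + d := ⟨n - d, by omega⟩
    have hSm := (pos_and_mul_le_succ hq0 hq1 hinit hstep m).1
    have : 0 ≤ q ^ d * (1 - q) := mul_nonneg (pow_nonneg hq0.le d) (sub_nonneg.2 hq1)
    rw [hstep m]
    exact sub_le_self _ (mul_nonneg this hSm.le)

lemma succ_le_mul_of_recurrence (hq0 : 0 < q) (hq1 : q ≤ 1) (hinit : ∀ t ≤ d, S t = 1)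
    (hstep : ∀ n, S (n + d + 1) = S (n + d) - q ^ d * (1 - q) * S n) (n : ℕ) (hn : d ≤ n) :
    S (n + 1) ≤ (1 - q ^ d * (1 - q)) * S n := by
  obtain ⟨m, rfl⟩ : ∃ m, n = m + d := ⟨n - d, by omega⟩
  have hmono : S (m + d) ≤ S m := antitone_of_recurrence hq0 hq1 hinit hstep (by omega)
  have hc : 0 ≤ q ^ d * (1 - q) := mul_nonneg (pow_nonneg hq0.le d) (sub_nonneg.2 hq1)
  have := mul_le_mul_of_nonneg_left hmono hc
  rw [hstep m]
  linarith

end SisyphusRecurrence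

theorem stmt2_general (q : ℝ) (hq0 : 0 < q) (hq1 : q < 1) (xT : ℕ)
    (S : ℕ → ℝ)
    (hinit : ∀ t : ℕ, t ≤ xT → S t = 1)
    (hrec : ∀ t : ℕ, xT < t →
      S t = S (t - 1) - q ^ xT * (1 - q) * S (t - xT - 1)) :
    ∃ C > (0 : ℝ), ∃ lam : ℝ, lam ∈ Set.Ioo (0 : ℝ) 1 ∧
      1 - q ^ xT * (1 - q) ≤ lam ∧ ∀ t : ℕ, S t ≤ C * lam ^ t := by
  have hstep : ∀ n, S (n + xT + 1) = S (n + xT) - q ^ xT * (1 - q) * S n := fun n => by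
    simpa [show n + xT + 1 - xT - 1 = n by omega] using hrec (n + xT + 1) (by omega)
  set c := q ^ xT * (1 - q)
  have hc0 : 0 < c := mul_pos (pow_pos hq0 xT) (sub_pos.2 hq1)
  have hc1 : c < 1 :=
    (mul_le_of_le_one_left (sub_pos.2 hq1).le (pow_le_one₀ hq0.le hq1.le)).trans_lt
      (by linarith)
  have hlam : 0 < 1 - c := by linarith
  refine ⟨((1 - c) ^ xT)⁻¹, by positivity, 1 - c, ⟨hlam, by linarith⟩, le_rfl, fun t => ?_⟩
  calc S t ≤ (1 - c) ^ (t - xT) :=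
        le_pow_sub_of_succ_le_mul hlam.le (fun n hn => (hinit n hn).le)
          (succ_le_mul_of_recurrence hq0 hq1.le hinit hstep) t
    _ ≤ ((1 - c) ^ xT)⁻¹ * (1 - c) ^ t :=
        pow_sub_le_inv_pow_mul_pow hlam (by linarith) t xT

theorem stmt2 (q : ℝ) (hq0 : 0 < q) (hq1 : q < 1) (xT : ℕ) (hxT : 1 ≤ xT)
    (S : ℕ → ℝ)
    (hinit : ∀ t : ℕ, t ≤ xT → S t = 1)
    (hrec : ∀ t : ℕ, xT < t →
      S t = S (t - 1) - q ^ xT * (1 - q) * S (t - xT - 1)) :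
    ∃ C > (0 : ℝ), ∃ lam : ℝ, lam ∈ Set.Ioo (0 : ℝ) 1 ∧
      1 - q ^ xT * (1 - q) ≤ lam ∧ ∀ t : ℕ, S t ≤ C * lam ^ t :=
  stmt2_general q hq0 hq1 xT S hinit hrec
end

section
/- Let 0 < q < 1, β > 0, and suppose x_T(t) → ∞ with x_T(t)/t → 0 as t → ∞. Define F(t) = (1 - 1/t)^{-β} - q^{x_T(t)}·(1-q)·(1 - (x_T(t)+1)/t)^{-β}. Then F(t) = 1 for all large t implies q^{x_T(t)} = (β/(1-q))·(1/t) + O(x_T(t)/t²) as t → ∞. -/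
open Filter Asymptotics Real
open scoped Topology

/-!
Write `x = x_T(t)`, `A = (1 - 1/t)^(-β)` and `B = (1 - (x + 1)/t)^(-β)`. The equation `F(t) = 1`
rearranges to
  `(q^x - β / ((1 - q) t)) · (1 - q) B = (A - 1 - β/t) + (β/t) (1 - B)`.
Taylor expansion of `y ↦ (1 - y)^(-β)` at `0` gives `A - 1 - β/t = O(1/t²)` and
`B - 1 = O((x + 1)/t)`, so the right side is `O(x/t²)` because `x → ∞`; and `B → 1` because
`x/t → 0`. The second-order bound comes from the mean value theorem applied to the remainder,
whose derivative `β ((1 - y)^(-β-1) - 1)` is `O(y)` by the first-order bound.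
-/

theorem isBigO_sq_of_hasDerivAt_of_deriv_isBigO {E : Type*} [NormedAddCommGroup E]
    [NormedSpace ℝ E] {f f' : ℝ → E} (hf : ∀ᶠ x in 𝓝 0, HasDerivAt f (f' x) x)
    (hf' : f' =O[𝓝 0] fun x => x) :
    (fun x => f x - f 0) =O[𝓝 0] fun x => x ^ 2 := by
  obtain ⟨C, hC0, hC⟩ := hf'.exists_nonneg
  obtain ⟨ε, hε, hball⟩ := Metric.eventually_nhds_iff_ball.1 (hf.and hC.bound)
  refine IsBigO.of_bound C ?_
  filter_upwards [Metric.ball_mem_nhds 0 hε] with x hx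
  have hsub : Metric.closedBall 0 |x| ⊆ Metric.ball (0 : ℝ) ε := fun y hy => by
    simp only [Metric.mem_closedBall, Metric.mem_ball, dist_zero_right] at hx hy ⊢
    exact hy.trans_lt hx
  have hmv := (convex_closedBall (0 : ℝ) |x|).norm_image_sub_le_of_norm_hasDerivWithin_le
    (f := f) (f' := f') (C := C * |x|)
    (fun y hy => (hball y (hsub hy)).1.hasDerivWithinAt)
    (fun y hy => (hball y (hsub hy)).2.trans <| by
      simp only [Metric.mem_closedBall, dist_zero_right] at hy
      exact mul_le_mul_of_nonneg_left hy hC0)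
    (x := 0) (y := x) (by simp) (by simp)
  simpa [sq, mul_assoc] using hmv

theorem isBigO_one_sub_rpow_neg_sub_one (p : ℝ) :
    (fun x : ℝ => (1 - x) ^ (-p) - 1) =O[𝓝 0] fun x => x := by
  have hd : HasDerivAt (fun x : ℝ => (1 - x) ^ (-p)) (-1 * -p * (1 - 0) ^ (-p - 1)) 0 :=
    ((hasDerivAt_id 0).const_sub 1).rpow_const (by norm_num)
  simpa using hd.isBigO_sub

theorem isBigO_one_sub_rpow_neg_sub_one_sub_mul (p : ℝ) :
    (fun x : ℝ => (1 - x) ^ (-p) - 1 - p * x) =O[𝓝 0] fun x => x ^ 2 := by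
  have hd : ∀ᶠ x in 𝓝 (0 : ℝ), HasDerivAt (fun x : ℝ => (1 - x) ^ (-p) - 1 - p * x)
      (p * ((1 - x) ^ (-(p + 1)) - 1)) x := by
    filter_upwards [eventually_ne_nhds (zero_ne_one' ℝ)] with x hx
    have h := ((((hasDerivAt_id' x).const_sub 1).rpow_const (p := -p)
      (Or.inl (sub_ne_zero.2 hx.symm))).sub_const 1).sub ((hasDerivAt_id' x).const_mul p)
    exact h.congr_deriv (by rw [neg_add']; ring)
  simpa using isBigO_sq_of_hasDerivAt_of_deriv_isBigO hd
    ((isBigO_one_sub_rpow_neg_sub_one (p + 1)).const_mul_left p)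

theorem stmt6_general (q β : ℝ) (hq1 : q < 1)
    (xT : ℝ → ℝ)
    (hx1 : Tendsto xT atTop atTop)
    (hx2 : Tendsto (fun t : ℝ => xT t / t) atTop (nhds 0))
    (hF : ∀ᶠ t : ℝ in atTop,
      (1 - 1 / t) ^ (-β) - q ^ xT t * (1 - q) * (1 - (xT t + 1) / t) ^ (-β) = 1) :
    (fun t : ℝ => q ^ xT t - (β / (1 - q)) * (1 / t)) =O[atTop]
      fun t : ℝ => xT t / t ^ 2 := by
  have hu : Tendsto (fun t : ℝ => 1 / t) atTop (𝓝 0) := tendsto_const_nhds.div_atTop tendsto_id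
  have hs : Tendsto (fun t => (xT t + 1) / t) atTop (𝓝 0) := by
    simpa [add_div] using hx2.add hu
  have hA := (isBigO_one_sub_rpow_neg_sub_one_sub_mul β).comp_tendsto hu
  have hB := (isBigO_one_sub_rpow_neg_sub_one β).comp_tendsto hs
  have hBlim : Tendsto (fun t => (1 - (xT t + 1) / t) ^ (-β)) atTop (𝓝 1) := by
    simpa using (hB.trans_tendsto hs).add_const 1
  have hone : (fun _ => (1 : ℝ)) =O[atTop] xT :=
    ((isLittleO_one_left_iff ℝ).2 (tendsto_abs_atTop_atTop.comp hx1)).isBigO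
  have hinv := isBigO_refl (fun t : ℝ => (t ^ 2)⁻¹) atTop
  have hsq : (fun t : ℝ => (1 / t) ^ 2) =O[atTop] fun t => xT t / t ^ 2 :=
    (hone.mul hinv).congr (fun t => by ring) (fun t => by ring)
  have hmix : (fun t => 1 / t * ((xT t + 1) / t)) =O[atTop] fun t => xT t / t ^ 2 :=
    (((isBigO_refl xT atTop).add hone).mul hinv).congr (fun t => by ring) (fun t => by ring)
  have hnum : (fun t => ((1 - 1 / t) ^ (-β) - 1 - β * (1 / t)) +
      β * (1 / t) * (1 - (1 - (xT t + 1) / t) ^ (-β))) =O[atTop] fun t => xT t / t ^ 2 := by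
    refine (hA.trans hsq).add (IsBigO.trans ?_ hmix)
    exact (((isBigO_refl (fun t : ℝ => 1 / t) atTop).mul hB.neg_left).const_mul_left β)
      |>.congr_left fun t => by simp only [Function.comp_apply]; ring
  have hden :
      (fun t => ((1 - q) * (1 - (xT t + 1) / t) ^ (-β))⁻¹) =O[atTop] fun _ => (1 : ℝ) :=
    ((tendsto_const_nhds.mul hBlim).inv₀ (by simp; linarith)).isBigO_one ℝ
  refine (hnum.mul hden).congr' ?_ (by simp)
  filter_upwards [hF, hBlim.eventually_ne one_ne_zero] with t hFt hB0
  have hq : 1 - q ≠ 0 := by linarith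
  field_simp
  linear_combination hFt

theorem stmt6 (q β : ℝ) (hq0 : 0 < q) (hq1 : q < 1) (hβ : 0 < β)
    (xT : ℝ → ℝ)
    (hx1 : Tendsto xT atTop atTop)
    (hx2 : Tendsto (fun t : ℝ => xT t / t) atTop (nhds 0))
    (hF : ∀ᶠ t : ℝ in atTop,
      (1 - 1 / t) ^ (-β) - q ^ xT t * (1 - q) * (1 - (xT t + 1) / t) ^ (-β) = 1) :
    (fun t : ℝ => q ^ xT t - (β / (1 - q)) * (1 / t)) =O[atTop]
      fun t : ℝ => xT t / t ^ 2 :=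
  stmt6_general q β hq1 xT hx1 hx2 hF
end

section
/- Let 0 < q < 1, b ∈ ℝ, a = 1/ln(1/q), and set β = (1-q)·q^b. Then with x_T(t) = a·ln t + b, the power-law function S(t) = α·t^{-β} satisfies the asymptotic balance S(t-1) - S(t) = q^{x_T(t)}·(1-q)·S(t - x_T(t) - 1)·(1 + o(1)) as t → ∞, for any α > 0. -/
/-!
Since `a * log q = -1`, the trap factor is `q ^ xT t = q ^ b / t`, so the right-hand side is
`α β t⁻¹ (t - a log t - b - 1) ^ (-β) ~ α β t ^ (-β - 1)`, because `t - a log t - b - 1 ~ t`.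
The left-hand side is a backward difference of `α t ^ (-β)`, hence also `~ α β t ^ (-β - 1)`.
-/

open Filter Asymptotics Real Topology

theorem rpow_sub_one_sub_rpow_isEquivalent (p : ℝ) :
    (fun t : ℝ => (t - 1) ^ p - t ^ p) ~[atTop] fun t => -p * t ^ (p - 1) := by
  rcases eq_or_ne p 0 with rfl | hp
  · simpa using IsEquivalent.refl
  -- `((t - 1) ^ p - t ^ p) / t ^ (p - 1)` is minus the slope of `x ↦ x ^ p` at `1`, step `-1/t`.
  have hslope : Tendsto (fun h : ℝ => h⁻¹ * ((1 + h) ^ p - 1)) (𝓝[≠] 0) (𝓝 p) := by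
    simpa using hasDerivAt_iff_tendsto_slope_zero.mp
      (hasDerivAt_rpow_const (x := 1) (p := p) (Or.inl one_ne_zero))
  have hstep : Tendsto (fun t : ℝ => -t⁻¹) atTop (𝓝[≠] 0) := by
    refine tendsto_nhdsWithin_iff.mpr ⟨by simpa using (tendsto_inv_atTop_zero (𝕜 := ℝ)).neg, ?_⟩
    filter_upwards [eventually_gt_atTop 0] with t ht
    simpa using ht.ne'
  have hlim := (isEquivalent_const_iff_tendsto (neg_ne_zero.mpr hp)).mpr (hslope.comp hstep).neg
  refine ((IsEquivalent.refl (u := fun t : ℝ => t ^ (p - 1))).mul hlim).congr_left ?_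
    |>.congr_right ?_
  · filter_upwards [eventually_gt_atTop 1] with t ht
    have ht0 : 0 < t := one_pos.trans ht
    have hsplit : (t - 1) ^ p = t ^ p * (1 - t⁻¹) ^ p := by
      rw [← mul_rpow ht0.le (by simpa using inv_le_one_of_one_le₀ ht.le)]
      congr 1
      field_simp
    simp only [Pi.mul_apply, Function.comp_apply]
    rw [hsplit, rpow_sub_one ht0.ne', ← sub_eq_add_neg]
    field_simp
  · exact EventuallyEq.of_eq (funext fun t => mul_comm _ _)

theorem Asymptotics.IsEquivalent.rpow_of_eventually_nonneg {α : Type*} {l : Filter α}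
    {u v : α → ℝ} (hv : 0 ≤ᶠ[l] v) (h : u ~[l] v) (r : ℝ) :
    (fun x => u x ^ r) ~[l] fun x => v x ^ r := by
  have habs : v =ᶠ[l] fun x => |v x| := hv.mono fun x hx => (abs_of_nonneg hx).symm
  refine ((h.congr_right habs).rpow (fun x => abs_nonneg (v x)) (r := r)).congr_right ?_
  filter_upwards [habs] with x hx
  simp [← hx]

theorem isEquivalent_sub_mul_log_sub_atTop (a c : ℝ) :
    (fun t => t - a * log t - c) ~[atTop] id := by
  have hsmall : (fun t => -(a * log t) - c) =o[atTop] id :=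
    (isLittleO_log_id_atTop.const_mul_left a).neg_left.sub (isLittleO_const_id_atTop c)
  refine ((IsEquivalent.refl (u := id)).add_isLittleO hsmall).congr_left (.of_eq ?_)
  funext t
  simp only [Pi.add_apply, id]
  ring

theorem rpow_log_div_log_one_div {q t : ℝ} (hq0 : 0 < q) (hq1 : q ≠ 1) (ht : 0 < t) :
    q ^ (log t / log (1 / q)) = t⁻¹ := by
  rw [one_div, log_inv, div_neg, ← logb, rpow_neg hq0.le, rpow_logb hq0 hq1 ht]

theorem stmt8_general (q b α : ℝ) (hq0 : 0 < q) (hq1 : q < 1)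
    (a β : ℝ) (ha : a = 1 / Real.log (1 / q)) (hβ : β = (1 - q) * q ^ b)
    (S xT : ℝ → ℝ)
    (hS : ∀ t : ℝ, S t = α * t ^ (-β))
    (hxT : ∀ t : ℝ, xT t = a * Real.log t + b) :
    (fun t : ℝ => S (t - 1) - S t) ~[atTop]
      fun t : ℝ => q ^ xT t * (1 - q) * S (t - xT t - 1) := by
  have hqxT : ∀ᶠ t in atTop, q ^ xT t = q ^ b * t⁻¹ := by
    filter_upwards [eventually_gt_atTop 0] with t ht
    rw [hxT, rpow_add hq0, ha, one_div_mul_eq_div, rpow_log_div_log_one_div hq0 hq1.ne ht,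
      mul_comm]
  have hL : (fun t => S (t - 1) - S t) ~[atTop] fun t => α * (β * t ^ (-β - 1)) := by
    convert (IsEquivalent.refl (u := fun _ : ℝ => α)).mul
      (rpow_sub_one_sub_rpow_isEquivalent (-β)) using 1 <;> funext t
    · simp only [hS, Pi.mul_apply]; ring
    · simp only [Pi.mul_apply, neg_neg]
  have hR : (fun t => q ^ xT t * (1 - q) * S (t - xT t - 1)) ~[atTop]
      fun t => α * (β * t ^ (-β - 1)) := by
    have hpow := (isEquivalent_sub_mul_log_sub_atTop a (b + 1)).rpow_of_eventually_nonneg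
      (eventually_ge_atTop 0) (-β)
    refine ((IsEquivalent.refl (u := fun t : ℝ => α * β * t⁻¹)).mul hpow).congr_left ?_
      |>.congr_right ?_
    · filter_upwards [hqxT] with t ht
      simp only [Pi.mul_apply]
      rw [ht, hS, hxT, hβ, show t - (a * log t + b) - 1 = t - a * log t - (b + 1) by ring]
      ring
    · filter_upwards [eventually_gt_atTop 0] with t ht
      simp only [Pi.mul_apply, rpow_sub_one ht.ne']
      ring
  exact hL.trans hR.symm

theorem stmt8 (q b α : ℝ) (hq0 : 0 < q) (hq1 : q < 1) (hα : 0 < α)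
    (a β : ℝ) (ha : a = 1 / Real.log (1 / q)) (hβ : β = (1 - q) * q ^ b)
    (S xT : ℝ → ℝ)
    (hS : ∀ t : ℝ, S t = α * t ^ (-β))
    (hxT : ∀ t : ℝ, xT t = a * Real.log t + b) :
    (fun t : ℝ => S (t - 1) - S t) ~[atTop]
      fun t : ℝ => q ^ xT t * (1 - q) * S (t - xT t - 1) :=
  stmt8_general q b α hq0 hq1 a β ha hβ S xT hS hxT
end

section
/- Let 0 < q < 1 and let N_k(t) denote the number of Sisyphus walkers at position k at time t, evolving by N_0(t+1) = (1-q)·∑_{k=0}^{x_T-1} N_k(t) and N_{k+1}(t+1) = q·N_k(t) for 0 ≤ k < x_T - 1, with a static trap at x_T ≥ 1 and initial condition N_0(0)=1, N_k(0)=0 for k ≥ 1. Then the number absorbed at time t, d(t) = q·N_{x_T-1}(t-1), satisfies d(t) = q^{x_T}·(1-q)·N_tot(t - x_T - 1) for all t ≥ x_T + 1, where N_tot(s) = ∑_{k=0}^{x_T-1} N_k(s). -/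
theorem apply_add_eq_pow_mul_apply_zero {M : Type*} [Monoid M] {f : ℕ → ℕ → M} {c : M} {m : ℕ}
    (hstep : ∀ t k, k < m → f (k + 1) (t + 1) = c * f k t) {j : ℕ} (hj : j ≤ m) (s : ℕ) :
    f j (s + j) = c ^ j * f 0 s := by
  induction j with
  | zero => simp
  | succ j ih =>
    rw [← add_assoc, hstep _ _ hj, ih (by omega), pow_succ', mul_assoc]

theorem stmt11_general (q : ℝ) (xT : ℕ) (hxT : 1 ≤ xT)
    (N : ℕ → ℕ → ℝ)
    (hrec0 : ∀ t : ℕ, N 0 (t + 1) = (1 - q) * ∑ k ∈ Finset.range xT, N k t)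
    (hrec : ∀ t : ℕ, ∀ k : ℕ, k < xT - 1 → N (k + 1) (t + 1) = q * N k t) :
    ∀ t : ℕ, xT + 1 ≤ t →
      q * N (xT - 1) (t - 1) =
        q ^ xT * (1 - q) * ∑ k ∈ Finset.range xT, N k (t - xT - 1) := by
  intro t ht
  obtain ⟨s, rfl⟩ : ∃ s, t = s + xT + 1 := ⟨t - xT - 1, by omega⟩
  -- a walker absorbed at time `s + xT + 1` was reset to the origin at time `s + 1`
  have hpath := apply_add_eq_pow_mul_apply_zero hrec le_rfl (s + 1)
  rw [show s + xT + 1 - 1 = s + 1 + (xT - 1) by omega, show s + xT + 1 - xT - 1 = s by omega,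
    hpath, hrec0, ← mul_assoc, ← pow_succ', Nat.sub_add_cancel hxT, mul_assoc]

theorem stmt11 (q : ℝ) (hq0 : 0 < q) (hq1 : q < 1) (xT : ℕ) (hxT : 1 ≤ xT)
    (N : ℕ → ℕ → ℝ)
    (h00 : N 0 0 = 1)
    (h0k : ∀ k : ℕ, 1 ≤ k → N k 0 = 0)
    (hrec0 : ∀ t : ℕ, N 0 (t + 1) = (1 - q) * ∑ k ∈ Finset.range xT, N k t)
    (hrec : ∀ t : ℕ, ∀ k : ℕ, k < xT - 1 → N (k + 1) (t + 1) = q * N k t) :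
    ∀ t : ℕ, xT + 1 ≤ t →
      q * N (xT - 1) (t - 1) =
        q ^ xT * (1 - q) * ∑ k ∈ Finset.range xT, N k (t - xT - 1) :=
  stmt11_general q xT hxT N hrec0 hrec
end

section
/- Let 0 < q < 1, x_T ≥ 1, and let S : ℕ → ℝ satisfy S(t) = 1 for t ≤ x_T and S(t) = S(t-1) - q^{x_T}(1-q)·S(t - x_T - 1) for t > x_T. Then the limit γ = lim_{t→∞} -ln S(t)/t exists and equals -ln λ*, where λ* ∈ (0,1) is the unique real root in (0,1) of the characteristic polynomial λ^{x_T+1} - λ^{x_T} + q^{x_T}(1-q) = 0 of largest modulus, provided q^{x_T}(1-q) < x_T^{x_T}/(x_T+1)^{x_T+1}. -/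
/-!
Put `p = x_T`, `Q = q^p (1 - q)` and `g μ = 1 - Q / μ^p`; for `μ ≠ 0`, `g μ = μ` is exactly
the characteristic equation. If `μ S(s) ≤ S(s+1)` on the window `a ≤ s < a + p`, then
`μ^p S(a) ≤ S(a+p)`, and the recurrence `S(a+p+1) = S(a+p) - Q S(a)` turns this into
`g μ · S(a+p) ≤ S(a+p+1)`; the same holds with every inequality reversed. So a fixed point `λ`
bounds the one-step ratio from below at all times, giving `λ^t ≤ S(t)`, while the iterates
`ν_k = g^[k] 1` bound it from above from time `k p` on.

The hypothesis on `Q` says `Q < c^p (1 - c)` at `c = p/(p+1)`, the maximiser of `μ^p (1 - μ)`,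
i.e. `c < g c`. Since `g` is increasing on `(0, ∞)`, the iterates decrease to a fixed point
`λ ≥ c`, and they stay above every fixed point in `(0, 1)`, so `λ` is the largest root there.
Finally `log S(t) / t` is squeezed between `log λ` and `log ν_k + O(1/t)`.
-/

open Filter Real Set
open scoped Topology

noncomputable def ratioMap (Q : ℝ) (p : ℕ) (μ : ℝ) : ℝ := 1 - Q / μ ^ p

section RatioMap

variable {Q : ℝ} {p : ℕ}

lemma ratioMap_le_one (hQ : 0 ≤ Q) {μ : ℝ} (hμ : 0 ≤ μ) : ratioMap Q p μ ≤ 1 := by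
  unfold ratioMap
  have : 0 ≤ Q / μ ^ p := by positivity
  linarith

lemma ratioMap_lt_one (hQ : 0 < Q) {μ : ℝ} (hμ : 0 < μ) : ratioMap Q p μ < 1 := by
  unfold ratioMap
  have : 0 < Q / μ ^ p := by positivity
  linarith

lemma ratioMap_le_ratioMap (hQ : 0 ≤ Q) {a b : ℝ} (ha : 0 < a) (hab : a ≤ b) :
    ratioMap Q p a ≤ ratioMap Q p b := by
  unfold ratioMap
  gcongr

lemma ratioMap_eq_self_iff {μ : ℝ} (hμ : μ ≠ 0) :
    ratioMap Q p μ = μ ↔ μ ^ (p + 1) - μ ^ p + Q = 0 := by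
  have hμp : μ ^ p ≠ 0 := pow_ne_zero p hμ
  unfold ratioMap
  rw [sub_eq_iff_eq_add, ← sub_eq_iff_eq_add', eq_div_iff hμp, pow_succ]
  constructor <;> intro h <;> linarith

lemma div_succ_lt_ratioMap (hp : 1 ≤ p) (hQ : Q < (p : ℝ) ^ p / ((p : ℝ) + 1) ^ (p + 1)) :
    (p : ℝ) / (p + 1) < ratioMap Q p ((p : ℝ) / (p + 1)) := by
  have hp0 : (0 : ℝ) < p := by exact_mod_cast hp
  have hc : (p : ℝ) ^ p / ((p : ℝ) + 1) ^ (p + 1) =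
      ((p : ℝ) / (p + 1)) ^ p * (1 - p / (p + 1)) := by
    rw [div_pow, pow_succ]
    field_simp
    ring
  rw [hc] at hQ
  unfold ratioMap
  have hcp : 0 < ((p : ℝ) / (p + 1)) ^ p := by positivity
  rw [lt_sub_comm, div_lt_iff₀ hcp]
  linarith

lemma le_iterate_ratioMap (hQ : 0 ≤ Q) {m : ℝ} (hm0 : 0 < m) (hm : m ≤ ratioMap Q p m)
    (k : ℕ) : m ≤ (ratioMap Q p)^[k] 1 := by
  induction k with
  | zero => exact hm.trans (ratioMap_le_one hQ hm0.le)
  | succ k ih =>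
    rw [Function.iterate_succ_apply']
    exact hm.trans (ratioMap_le_ratioMap hQ hm0 ih)

lemma antitone_iterate_ratioMap (hQ : 0 ≤ Q) (hpos : ∀ k, 0 < (ratioMap Q p)^[k] 1) :
    Antitone fun k => (ratioMap Q p)^[k] 1 := by
  refine antitone_nat_of_succ_le fun k => ?_
  induction k with
  | zero => exact ratioMap_le_one hQ zero_le_one
  | succ k ih =>
    simpa only [Function.iterate_succ_apply'] using ratioMap_le_ratioMap hQ (hpos (k + 1)) ih

lemma exists_isFixedPt_tendsto_iterate_ratioMap (hQ : 0 ≤ Q) {m : ℝ} (hm0 : 0 < m)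
    (hm : m ≤ ratioMap Q p m) :
    ∃ l, m ≤ l ∧ ratioMap Q p l = l ∧
      Tendsto (fun k => (ratioMap Q p)^[k] 1) atTop (𝓝 l) := by
  have hlow := le_iterate_ratioMap hQ hm0 hm
  have hanti := antitone_iterate_ratioMap hQ fun k => hm0.trans_le (hlow k)
  have hlim := tendsto_atTop_ciInf hanti ⟨m, by rintro _ ⟨k, rfl⟩; exact hlow k⟩
  have hml : m ≤ ⨅ k, (ratioMap Q p)^[k] 1 := le_ciInf hlow
  refine ⟨_, hml, isFixedPt_of_tendsto_iterate hlim ?_, hlim⟩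
  have : (⨅ k, (ratioMap Q p)^[k] 1) ≠ 0 := (hm0.trans_le hml).ne'
  unfold ratioMap
  fun_prop (disch := positivity)

end RatioMap

section Recurrence

variable {Q : ℝ} {p : ℕ} {S : ℕ → ℝ}

lemma ratioMap_mul_le_of_pow_mul_le (hS : ∀ a, S (a + p + 1) = S (a + p) - Q * S a)
    (hQ : 0 ≤ Q) {μ : ℝ} (hμ : 0 < μ) {a : ℕ} (h : μ ^ p * S a ≤ S (a + p)) :
    ratioMap Q p μ * S (a + p) ≤ S (a + p + 1) := by
  have hSa : S a ≤ S (a + p) / μ ^ p := by rw [le_div_iff₀ (by positivity), mul_comm]; exact h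
  rw [hS, ratioMap, sub_mul, one_mul, ← mul_div_right_comm, mul_div_assoc]
  gcongr

lemma le_ratioMap_mul_of_le_pow_mul (hS : ∀ a, S (a + p + 1) = S (a + p) - Q * S a)
    (hQ : 0 ≤ Q) {μ : ℝ} (hμ : 0 < μ) {a : ℕ} (h : S (a + p) ≤ μ ^ p * S a) :
    S (a + p + 1) ≤ ratioMap Q p μ * S (a + p) := by
  have hSa : S (a + p) / μ ^ p ≤ S a := by rw [div_le_iff₀ (by positivity), mul_comm]; exact h
  rw [hS, ratioMap, sub_mul, one_mul, ← mul_div_right_comm, mul_div_assoc]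
  gcongr

lemma mul_le_succ_of_ratioMap_eq_self (hinit : ∀ t ≤ p, S t = 1)
    (hS : ∀ a, S (a + p + 1) = S (a + p) - Q * S a) (hQ : 0 ≤ Q) {l : ℝ} (hl : 0 < l)
    (hfix : ratioMap Q p l = l) (t : ℕ) : l * S t ≤ S (t + 1) := by
  induction t using Nat.strong_induction_on with
  | _ t ih =>
    obtain ht | ⟨a, rfl⟩ : t < p ∨ ∃ a, t = a + p :=
      (lt_or_ge t p).imp_right fun h => ⟨t - p, by omega⟩
    · rw [hinit t ht.le, hinit (t + 1) ht]
      simpa using hfix ▸ ratioMap_le_one hQ hl.le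
    · have hwindow : l ^ p * S a ≤ S (a + p) :=
        geom_le (u := fun j => S (a + j)) hl.le p fun j hj => ih (a + j) (by omega)
      simpa [hfix] using ratioMap_mul_le_of_pow_mul_le hS hQ hl hwindow

lemma pow_le_of_ratioMap_eq_self (hinit : ∀ t ≤ p, S t = 1)
    (hS : ∀ a, S (a + p + 1) = S (a + p) - Q * S a) (hQ : 0 ≤ Q) {l : ℝ} (hl : 0 < l)
    (hfix : ratioMap Q p l = l) (t : ℕ) : l ^ t ≤ S t := by
  simpa [hinit 0 (Nat.zero_le p)] using
    geom_le hl.le t fun k _ => mul_le_succ_of_ratioMap_eq_self hinit hS hQ hl hfix k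

lemma antitone_of_pos (hinit : ∀ t ≤ p, S t = 1)
    (hS : ∀ a, S (a + p + 1) = S (a + p) - Q * S a) (hQ : 0 ≤ Q) (hpos : ∀ t, 0 < S t) :
    Antitone S := by
  refine antitone_nat_of_succ_le fun t => ?_
  obtain ht | ⟨a, rfl⟩ : t < p ∨ ∃ a, t = a + p :=
    (lt_or_ge t p).imp_right fun h => ⟨t - p, by omega⟩
  · rw [hinit t ht.le, hinit (t + 1) ht]
  · rw [hS]
    have := mul_nonneg hQ (hpos a).le
    linarith

lemma succ_le_iterate_ratioMap_mul (hinit : ∀ t ≤ p, S t = 1)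
    (hS : ∀ a, S (a + p + 1) = S (a + p) - Q * S a) (hQ : 0 ≤ Q) (hpos : ∀ t, 0 < S t)
    (hνpos : ∀ k, 0 < (ratioMap Q p)^[k] 1) (k t : ℕ) (ht : k * p ≤ t) :
    S (t + 1) ≤ (ratioMap Q p)^[k] 1 * S t := by
  induction k generalizing t with
  | zero => simpa using antitone_of_pos hinit hS hQ hpos (Nat.le_succ t)
  | succ k ih =>
    obtain ⟨a, rfl⟩ : ∃ a, t = a + p := ⟨t - p, by rw [add_one_mul] at ht; omega⟩
    have hwindow : S (a + p) ≤ ((ratioMap Q p)^[k] 1) ^ p * S a :=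
      le_geom (u := fun j => S (a + j)) (hνpos k).le p fun j _ =>
        ih (a + j) (by rw [add_one_mul] at ht; omega)
    rw [Function.iterate_succ_apply']
    exact le_ratioMap_mul_of_le_pow_mul hS hQ (hνpos k) hwindow

end Recurrence

lemma exists_le_mul_pow_of_succ_le_mul {u : ℕ → ℝ} {r : ℝ} {a : ℕ} (hr : 0 < r)
    (hu : 0 < u a) (h : ∀ t, a ≤ t → u (t + 1) ≤ r * u t) :
    ∃ C > 0, ∀ t, a ≤ t → u t ≤ C * r ^ t := by
  refine ⟨u a / r ^ a, by positivity, fun t ht => ?_⟩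
  obtain ⟨n, rfl⟩ := Nat.exists_eq_add_of_le ht
  have := le_geom (u := fun j => u (a + j)) hr.le n fun j _ => h (a + j) (Nat.le_add_right a j)
  rw [pow_add, div_mul_comm, mul_div_cancel_left₀ _ (by positivity)]
  simpa using this

lemma tendsto_log_div_of_pow_le_of_le_mul_pow {u ν : ℕ → ℝ} {l : ℝ} (hl : 0 < l)
    (hν : ∀ k, 0 < ν k) (hνl : Tendsto ν atTop (𝓝 l)) (hlow : ∀ t, l ^ t ≤ u t)
    (hup : ∀ k, ∃ C > 0, ∀ᶠ t in atTop, u t ≤ C * ν k ^ t) :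
    Tendsto (fun t : ℕ => log (u t) / t) atTop (𝓝 (log l)) := by
  have hu : ∀ t, 0 < u t := fun t => (pow_pos hl t).trans_le (hlow t)
  refine tendsto_order.2 ⟨fun b hb => ?_, fun b hb => ?_⟩
  · filter_upwards [eventually_gt_atTop 0] with t ht
    have ht' : (0 : ℝ) < t := by exact_mod_cast ht
    rw [lt_div_iff₀ ht']
    calc b * t < log l * t := by gcongr
      _ = log (l ^ t) := by rw [log_pow, mul_comm]
      _ ≤ log (u t) := log_le_log (pow_pos hl t) (hlow t)
  · obtain ⟨k, hk⟩ := ((hνl.log hl.ne').eventually (gt_mem_nhds hb)).exists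
    obtain ⟨C, hC, hCk⟩ := hup k
    have hlim : Tendsto (fun t : ℕ => log (ν k) + log C / t) atTop (𝓝 (log (ν k))) := by
      simpa using tendsto_const_nhds.add (tendsto_const_div_atTop_nhds_zero_nat (log C))
    filter_upwards [hlim.eventually (gt_mem_nhds hk), hCk, eventually_gt_atTop 0]
      with t hb' hCt ht
    have ht' : (0 : ℝ) < t := by exact_mod_cast ht
    refine lt_of_le_of_lt ?_ hb'
    rw [div_le_iff₀ ht', add_mul, div_mul_cancel₀ _ ht'.ne']
    calc log (u t) ≤ log (C * ν k ^ t) := log_le_log (hu t) hCt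
      _ = log (ν k) * t + log C := by
        rw [log_mul hC.ne' (pow_ne_zero _ (hν k).ne'), log_pow]; ring

theorem stmt12 (q : ℝ) (hq0 : 0 < q) (hq1 : q < 1) (xT : ℕ) (hxT : 1 ≤ xT)
    (hroot : q ^ xT * (1 - q) < (xT : ℝ) ^ xT / ((xT : ℝ) + 1) ^ (xT + 1))
    (S : ℕ → ℝ)
    (hinit : ∀ t : ℕ, t ≤ xT → S t = 1)
    (hrec : ∀ t : ℕ, xT < t →
      S t = S (t - 1) - q ^ xT * (1 - q) * S (t - xT - 1)) :
    ∃ lam : ℝ, lam ∈ Ioo (0 : ℝ) 1 ∧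
      lam ^ (xT + 1) - lam ^ xT + q ^ xT * (1 - q) = 0 ∧
      (∀ μ : ℝ, μ ∈ Ioo (0 : ℝ) 1 →
        μ ^ (xT + 1) - μ ^ xT + q ^ xT * (1 - q) = 0 → μ ≤ lam) ∧
      Tendsto (fun t : ℕ => -Real.log (S t) / t) atTop (nhds (-Real.log lam)) := by
  set Q := q ^ xT * (1 - q)
  have hQ : 0 < Q := mul_pos (pow_pos hq0 xT) (sub_pos.2 hq1)
  have hS : ∀ a, S (a + xT + 1) = S (a + xT) - Q * S a := fun a => by
    rw [hrec _ (by omega), Nat.add_sub_cancel, show a + xT + 1 - xT - 1 = a by omega]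
  obtain ⟨lam, hc, hfix, hν⟩ := exists_isFixedPt_tendsto_iterate_ratioMap hQ.le
    (by positivity) (div_succ_lt_ratioMap hxT hroot).le
  have hlam : 0 < lam := lt_of_lt_of_le (by positivity) hc
  have hνpos : ∀ k, 0 < (ratioMap Q xT)^[k] 1 :=
    fun k => hlam.trans_le (le_iterate_ratioMap hQ.le hlam hfix.ge k)
  have hlow := pow_le_of_ratioMap_eq_self hinit hS hQ.le hlam hfix
  have hpos : ∀ t, 0 < S t := fun t => (pow_pos hlam t).trans_le (hlow t)
  refine ⟨lam, ⟨hlam, hfix ▸ ratioMap_lt_one hQ hlam⟩,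
    (ratioMap_eq_self_iff hlam.ne').1 hfix, fun μ hμ hμroot => ?_, ?_⟩
  · have hμfix := ((ratioMap_eq_self_iff hμ.1.ne').2 hμroot).ge
    exact ge_of_tendsto' hν (le_iterate_ratioMap hQ.le hμ.1 hμfix)
  · simp only [neg_div]
    refine (tendsto_log_div_of_pow_le_of_le_mul_pow hlam hνpos hν hlow fun k => ?_).neg
    obtain ⟨C, hC, hCk⟩ := exists_le_mul_pow_of_succ_le_mul (hνpos k) (hpos (k * xT))
      (succ_le_iterate_ratioMap_mul hinit hS hQ.le hpos hνpos k)
    exact ⟨C, hC, eventually_atTop.2 ⟨_, hCk⟩⟩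
end

section
/- Let 0 < q < 1, a = 1/ln(1/q), b ∈ ℝ, β = (1-q)q^b, and α > 0. Define S(t) = α·t^{-β} for real t ≥ 1 and x_T(t) = a ln t + b. Then as t → ∞, S(t-1) - S(t) - q^{x_T(t)}(1-q)·S(t - x_T(t) - 1) = O(t^{-β-1}·(ln t)/t). -/
open Filter Asymptotics Real

/-!
The choice a = 1/ln(1/q) makes q^{x_T(t)}(1-q) = β/t exactly. With w = a ln t + b + 1 the residual
is therefore α times
  ((t-1)^{-β} - t^{-β} - β t^{-β-1}) - (β/t) ((t-w)^{-β} - t^{-β}).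
By the mean value theorem applied twice the first bracket is O(t^{-β-2}), and applied once the
second is O(t^{-β-1} w); since w = O(ln t) and eventually 0 ≤ w ≤ t/2, both are
O(t^{-β-1} (ln t)/t).
-/

theorem exists_rpow_neg_sub_rpow_neg_eq {p x y : ℝ} (hx : 0 < x) (hxy : x < y) :
    ∃ c ∈ Set.Ioo x y, x ^ (-p) - y ^ (-p) = p * c ^ (-p - 1) * (y - x) := by
  obtain ⟨c, hc, hslope⟩ := exists_hasDerivAt_eq_slope (fun s => s ^ (-p))
    (fun s => -p * s ^ (-p - 1)) hxy
    (fun s hs => (continuousAt_rpow_const s (-p) (Or.inl (hx.trans_le hs.1).ne')).continuousWithinAt)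
    (fun s hs => hasDerivAt_rpow_const (Or.inl (hx.trans hs.1).ne'))
  refine ⟨c, hc, ?_⟩
  rw [eq_div_iff (sub_ne_zero.mpr hxy.ne')] at hslope
  linear_combination hslope

theorem rpow_neg_sub_rpow_neg_le {p x y : ℝ} (hp : 0 ≤ p) (hx : 0 < x) (hxy : x ≤ y) :
    x ^ (-p) - y ^ (-p) ≤ p * x ^ (-p - 1) * (y - x) := by
  rcases hxy.eq_or_lt with rfl | hlt
  · simp
  obtain ⟨c, hc, heq⟩ := exists_rpow_neg_sub_rpow_neg_eq (p := p) hx hlt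
  rw [heq]
  have hcx : c ^ (-p - 1) ≤ x ^ (-p - 1) := rpow_le_rpow_of_nonpos hx hc.1.le (by linarith)
  exact mul_le_mul_of_nonneg_right (mul_le_mul_of_nonneg_left hcx hp) (by linarith)

theorem le_rpow_neg_sub_rpow_neg {p x y : ℝ} (hp : 0 ≤ p) (hx : 0 < x) (hxy : x ≤ y) :
    p * y ^ (-p - 1) * (y - x) ≤ x ^ (-p) - y ^ (-p) := by
  rcases hxy.eq_or_lt with rfl | hlt
  · simp
  obtain ⟨c, hc, heq⟩ := exists_rpow_neg_sub_rpow_neg_eq (p := p) hx hlt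
  rw [heq]
  have hyc : y ^ (-p - 1) ≤ c ^ (-p - 1) :=
    rpow_le_rpow_of_nonpos (hx.trans hc.1) hc.2.le (by linarith)
  exact mul_le_mul_of_nonneg_right (mul_le_mul_of_nonneg_left hyc hp) (by linarith)

theorem rpow_le_two_rpow_mul_rpow {r x y : ℝ} (hr : r ≤ 0) (hy : 0 < y) (hyx : y / 2 ≤ x) :
    x ^ r ≤ 2 ^ (-r) * y ^ r := by
  calc x ^ r ≤ (y / 2) ^ r := rpow_le_rpow_of_nonpos (by positivity) hyx hr
    _ = 2 ^ (-r) * y ^ r := by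
      rw [div_rpow hy.le zero_le_two, rpow_neg zero_le_two]; ring

theorem abs_sub_one_rpow_neg_sub_rpow_neg_sub_le {p t : ℝ} (hp : 0 ≤ p) (ht : 2 ≤ t) :
    |(t - 1) ^ (-p) - t ^ (-p) - p * t ^ (-p - 1)| ≤ p * (p + 1) * 2 ^ (p + 2) * t ^ (-p - 2) := by
  have ht1 : 0 < t - 1 := by linarith
  have hlower := le_rpow_neg_sub_rpow_neg hp ht1 (sub_le_self t zero_le_one)
  have hupper := rpow_neg_sub_rpow_neg_le hp ht1 (sub_le_self t zero_le_one)
  have hupper' := rpow_neg_sub_rpow_neg_le (by linarith : 0 ≤ p + 1) ht1 (sub_le_self t zero_le_one)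
  have hhalf : (t - 1) ^ (-p - 2) ≤ 2 ^ (p + 2) * t ^ (-p - 2) := by
    have := rpow_le_two_rpow_mul_rpow (by linarith : -p - 2 ≤ 0) (by linarith : 0 < t)
      (by linarith : t / 2 ≤ t - 1)
    rwa [neg_sub, sub_neg_eq_add, add_comm] at this
  simp only [sub_sub_cancel, mul_one, neg_add, ← sub_eq_add_neg] at hlower hupper hupper'
  rw [show -p - 1 - 1 = -p - 2 by ring] at hupper'
  calc |(t - 1) ^ (-p) - t ^ (-p) - p * t ^ (-p - 1)|
      = (t - 1) ^ (-p) - t ^ (-p) - p * t ^ (-p - 1) := abs_of_nonneg (by linarith)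
    _ ≤ p * ((t - 1) ^ (-p - 1) - t ^ (-p - 1)) := by linarith
    _ ≤ p * ((p + 1) * (t - 1) ^ (-p - 2)) := by gcongr
    _ ≤ p * ((p + 1) * (2 ^ (p + 2) * t ^ (-p - 2))) := by gcongr
    _ = p * (p + 1) * 2 ^ (p + 2) * t ^ (-p - 2) := by ring

theorem abs_rpow_neg_sub_rpow_neg_le {p t w : ℝ} (hp : 0 ≤ p) (ht : 0 < t) (hw : 0 ≤ w)
    (hwt : w ≤ t / 2) :
    |(t - w) ^ (-p) - t ^ (-p)| ≤ p * 2 ^ (p + 1) * t ^ (-p - 1) * w := by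
  have htw : 0 < t - w := by linarith
  have hupper := rpow_neg_sub_rpow_neg_le hp htw (sub_le_self t hw)
  have hhalf : (t - w) ^ (-p - 1) ≤ 2 ^ (p + 1) * t ^ (-p - 1) := by
    have := rpow_le_two_rpow_mul_rpow (by linarith : -p - 1 ≤ 0) ht (by linarith : t / 2 ≤ t - w)
    rwa [neg_sub, sub_neg_eq_add, add_comm] at this
  rw [sub_sub_cancel] at hupper
  rw [abs_of_nonneg (sub_nonneg.mpr (rpow_le_rpow_of_nonpos htw (sub_le_self t hw) (by linarith)))]
  calc _ ≤ p * (t - w) ^ (-p - 1) * w := hupper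
    _ ≤ p * (2 ^ (p + 1) * t ^ (-p - 1)) * w := by gcongr
    _ = _ := by ring

theorem isBigO_sub_one_rpow_neg_sub {p : ℝ} (hp : 0 ≤ p) :
    (fun t : ℝ => (t - 1) ^ (-p) - t ^ (-p) - p * t ^ (-p - 1)) =O[atTop]
      fun t => t ^ (-p - 2) := by
  refine IsBigO.of_bound (p * (p + 1) * 2 ^ (p + 2)) ?_
  filter_upwards [eventually_ge_atTop 2] with t ht
  rw [norm_eq_abs, norm_of_nonneg (rpow_nonneg (by linarith) _)]
  exact abs_sub_one_rpow_neg_sub_rpow_neg_sub_le hp ht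

theorem isBigO_rpow_neg_sub_rpow_neg {p : ℝ} (hp : 0 ≤ p) {w : ℝ → ℝ}
    (hw : ∀ᶠ t in atTop, 0 ≤ w t ∧ w t ≤ t / 2) :
    (fun t => (t - w t) ^ (-p) - t ^ (-p)) =O[atTop] fun t => t ^ (-p - 1) * w t := by
  refine IsBigO.of_bound (p * 2 ^ (p + 1)) ?_
  filter_upwards [hw, eventually_gt_atTop 0] with t ⟨hw0, hwt⟩ ht
  rw [norm_eq_abs, norm_of_nonneg (by positivity), ← mul_assoc]
  exact abs_rpow_neg_sub_rpow_neg_le hp ht hw0 hwt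

theorem rpow_sub_two_isBigO_rpow_sub_one_mul_log_div (r : ℝ) :
    (fun t : ℝ => t ^ (r - 2)) =O[atTop] fun t => t ^ (r - 1) * (log t / t) := by
  refine IsBigO.of_bound 1 ?_
  filter_upwards [eventually_ge_atTop (exp 1)] with t ht
  have ht0 : 0 < t := (exp_pos 1).trans_le ht
  have hlog : 1 ≤ log t := (le_log_iff_exp_le ht0).mpr ht
  rw [norm_of_nonneg (by positivity), norm_of_nonneg (by positivity), one_mul,
    show r - 2 = r - 1 - 1 by ring, rpow_sub_one ht0.ne', mul_div_assoc']
  gcongr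
  exact le_mul_of_one_le_right (by positivity) hlog

theorem isBigO_sub_one_rpow_neg_sub_mul_rpow_neg_sub {p : ℝ} (hp : 0 ≤ p) {w : ℝ → ℝ}
    (hw_log : w =O[atTop] log) (hw : ∀ᶠ t in atTop, 0 ≤ w t ∧ w t ≤ t / 2) :
    (fun t => (t - 1) ^ (-p) - t ^ (-p) - p * t⁻¹ * (t - w t) ^ (-p)) =O[atTop]
      fun t => t ^ (-p - 1) * (log t / t) := by
  have hsplit : (fun t => (t - 1) ^ (-p) - t ^ (-p) - p * t ^ (-p - 1)
      - p * t⁻¹ * ((t - w t) ^ (-p) - t ^ (-p))) =ᶠ[atTop]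
      fun t => (t - 1) ^ (-p) - t ^ (-p) - p * t⁻¹ * (t - w t) ^ (-p) := by
    filter_upwards [eventually_gt_atTop 0] with t ht
    rw [rpow_sub_one ht.ne']
    ring
  have hsecond := (isBigO_sub_one_rpow_neg_sub hp).trans
    (rpow_sub_two_isBigO_rpow_sub_one_mul_log_div (-p))
  have hshift : (fun t => p * t⁻¹ * ((t - w t) ^ (-p) - t ^ (-p))) =O[atTop]
      fun t => t ^ (-p - 1) * (log t / t) :=
    (((isBigO_refl (fun t : ℝ => t⁻¹) atTop).const_mul_left p).mul
      ((isBigO_rpow_neg_sub_rpow_neg hp hw).trans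
        ((isBigO_refl (fun t : ℝ => t ^ (-p - 1)) atTop).mul hw_log))).congr_right
      fun t => by ring
  exact (hsecond.sub hshift).congr' hsplit EventuallyEq.rfl

theorem isBigO_const_mul_log_add_const (a c : ℝ) :
    (fun t => a * log t + c) =O[atTop] log :=
  ((isBigO_refl log atTop).const_mul_left a).add isLittleO_const_log_atTop.isBigO

theorem eventually_const_mul_log_add_const_mem {a : ℝ} (ha : 0 < a) (c : ℝ) :
    ∀ᶠ t in atTop, 0 ≤ a * log t + c ∧ a * log t + c ≤ t / 2 := by
  filter_upwards [tendsto_log_atTop.eventually_ge_atTop (-c / a),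
    ((isBigO_const_mul_log_add_const a c).trans_isLittleO isLittleO_log_id_atTop).bound
      (by norm_num : (0 : ℝ) < 1 / 2),
    eventually_ge_atTop 0] with t hlog hsmall ht
  rw [div_le_iff₀ ha] at hlog
  rw [norm_eq_abs, id, norm_of_nonneg ht] at hsmall
  exact ⟨by linarith, by linarith [le_abs_self (a * log t + c)]⟩

theorem rpow_one_div_log_one_div_mul_log {q t : ℝ} (hq0 : 0 < q) (hq1 : q ≠ 1) (ht : 0 < t) :
    q ^ (1 / log (1 / q) * log t) = t⁻¹ := by
  have hlog : log q ≠ 0 := log_ne_zero_of_pos_of_ne_one hq0 hq1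
  rw [rpow_def_of_pos hq0, one_div q, log_inv, ← exp_log (inv_pos.mpr ht), log_inv]
  congr 1
  field_simp

theorem stmt17_general (q b α : ℝ) (hq0 : 0 < q) (hq1 : q < 1)
    (a β : ℝ) (ha : a = 1 / Real.log (1 / q)) (hβ : β = (1 - q) * q ^ b)
    (S xT : ℝ → ℝ)
    (hS : ∀ t : ℝ, 1 ≤ t → S t = α * t ^ (-β))
    (hxT : ∀ t : ℝ, xT t = a * Real.log t + b) :
    (fun t : ℝ => S (t - 1) - S t - q ^ xT t * (1 - q) * S (t - xT t - 1))
      =O[atTop] fun t : ℝ => t ^ (-β - 1) * (Real.log t / t) := by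
  have hβ0 : 0 ≤ β := hβ ▸ mul_nonneg (by linarith) (rpow_nonneg hq0.le b)
  have ha0 : 0 < a := by
    rw [ha, one_div_pos]; exact log_pos (one_lt_one_div hq0 hq1)
  have hw := eventually_const_mul_log_add_const_mem ha0 (b + 1)
  have hresidual := isBigO_sub_one_rpow_neg_sub_mul_rpow_neg_sub hβ0
    (isBigO_const_mul_log_add_const a (b + 1)) hw
  refine (hresidual.const_mul_left α).congr' ?_ EventuallyEq.rfl
  filter_upwards [hw, eventually_ge_atTop 2] with t hwt ht
  have hcoef : q ^ xT t * (1 - q) = β * t⁻¹ := by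
    rw [hxT, rpow_add hq0, ha, rpow_one_div_log_one_div_mul_log hq0 hq1.ne (by linarith), hβ]
    ring
  rw [hcoef, hS _ (by linarith), hS t (by linarith), hxT,
    show t - (a * log t + b) - 1 = t - (a * log t + (b + 1)) by ring, hS _ (by linarith [hwt.2])]
  ring

theorem stmt17 (q b α : ℝ) (hq0 : 0 < q) (hq1 : q < 1) (hα : 0 < α)
    (a β : ℝ) (ha : a = 1 / Real.log (1 / q)) (hβ : β = (1 - q) * q ^ b)
    (S xT : ℝ → ℝ)
    (hS : ∀ t : ℝ, 1 ≤ t → S t = α * t ^ (-β))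
    (hxT : ∀ t : ℝ, xT t = a * Real.log t + b) :
    (fun t : ℝ => S (t - 1) - S t - q ^ xT t * (1 - q) * S (t - xT t - 1))
      =O[atTop] fun t : ℝ => t ^ (-β - 1) * (Real.log t / t) :=
  stmt17_general q b α hq0 hq1 a β ha hβ S xT hS hxT
end

section
/- Let 0 < q < 1 and x_T(t) = a ln t + b with a < 1/ln(1/q) (trap moving slower than the critical logarithmic rate). If S : (real t ≥ T₀) → ℝ is positive, non-increasing, and satisfies S(t) ≤ S(t-1) - q^{x_T(t)}(1-q)·S(t - x_T(t) - 1) for all large t, then for every polynomial rate β > 0, S(t) = o(t^{-β}) as t → ∞; i.e., S decays faster than any inverse power of t. -/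
open Filter Asymptotics Real Set

/-!
With `γ = a log (1/q) < 1` the absorption weight is `q ^ x_T(t) (1 - q) = (1 - q) q ^ b t ^ (-γ)`,
and the delay `x_T(t) + 1 = O(log t)` keeps `t - x_T(t) - 1 ≤ 2t`, so by monotonicity
`S (t - 1) - S t ≥ c t ^ (-γ) S (2t)`. Summing these decrements over the `⌊n⌋` unit steps from
`n` towards `2n` gives `S n ≥ c' n ^ (1 - γ) S (4n)`, hence `S (4n) = o(S n)`, and comparing
`S` along the scales `4 ^ k n` beats every power `t ^ (-β)`.
-/

theorem mul_le_sub_of_forall_le_sub_succ {S : ℝ → ℝ} {n d : ℝ} (m : ℕ)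
    (h : ∀ j : ℕ, j < m → d ≤ S (n + j) - S (n + j + 1)) : m * d ≤ S n - S (n + m) := by
  induction m with
  | zero => simp
  | succ m ih =>
    have hlast := h m (lt_add_one m)
    have hfirst := ih fun j hj => h j (hj.trans (lt_add_one m))
    push_cast
    rw [← add_assoc]
    linarith

section DelayRecurrence

variable {S w : ℝ → ℝ} {T : ℝ}

theorem natFloor_mul_le_of_delay_recurrence (hanti : AntitoneOn S (Ici T))
    (hS0 : ∀ t, T ≤ t → 0 ≤ S t) (hw : AntitoneOn w (Ioi 0)) {n : ℝ} (hn : 0 < n)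
    (hnT : T ≤ n) (hw0 : 0 ≤ w (2 * n))
    (hrec : ∀ t ∈ Icc (n + 1) (2 * n), S t + w t * S (2 * t) ≤ S (t - 1)) :
    ⌊n⌋₊ * (w (2 * n) * S (4 * n)) ≤ S n := by
  have hdecr : ∀ j : ℕ, j < ⌊n⌋₊ →
      w (2 * n) * S (4 * n) ≤ S (n + j) - S (n + j + 1) := by
    intro j hj
    have hj1 : (j : ℝ) + 1 ≤ n := by
      have : ((j + 1 : ℕ) : ℝ) ≤ n := Nat.le_floor_iff hn.le |>.1 hj
      exact_mod_cast this
    have hj0 : (0 : ℝ) ≤ j := j.cast_nonneg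
    set t := n + j + 1
    have hwt : w (2 * n) ≤ w t :=
      hw (mem_Ioi.2 (by positivity)) (mem_Ioi.2 (by positivity)) (by linarith)
    have hSt : S (4 * n) ≤ S (2 * t) :=
      hanti (mem_Ici.2 (by linarith)) (mem_Ici.2 (by linarith)) (by linarith)
    have hstep := hrec t ⟨by linarith, by linarith⟩
    have : w (2 * n) * S (4 * n) ≤ w t * S (2 * t) :=
      mul_le_mul hwt hSt (hS0 _ (by linarith)) (hw0.trans hwt)
    rw [show t - 1 = n + j by ring] at hstep
    linarith
  have := mul_le_sub_of_forall_le_sub_succ ⌊n⌋₊ hdecr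
  linarith [hS0 (n + ⌊n⌋₊) (by linarith [Nat.cast_nonneg (α := ℝ) ⌊n⌋₊])]

theorem forall_eventually_mul_le_of_delay_recurrence (hanti : AntitoneOn S (Ici T))
    (hS0 : ∀ t, T ≤ t → 0 ≤ S t) (hw : AntitoneOn w (Ioi 0))
    (hgrowth : Tendsto (fun t => t * w t) atTop atTop)
    (hrec : ∀ᶠ t in atTop, S t + w t * S (2 * t) ≤ S (t - 1)) (C : ℝ) :
    ∀ᶠ n in atTop, C * S (4 * n) ≤ S n := by
  have hlarge : ∀ᶠ n in atTop, 0 ≤ w (2 * n) ∧ C ≤ ⌊n⌋₊ * w (2 * n) := by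
    filter_upwards [(hgrowth.comp (tendsto_id.const_mul_atTop two_pos)).eventually_ge_atTop
      (4 * max C 0), eventually_ge_atTop 1] with n hn hn1
    replace hn : 4 * max C 0 ≤ 2 * n * w (2 * n) := hn
    have hw0 : 0 ≤ w (2 * n) := by
      by_contra! h
      have : 2 * n * w (2 * n) < 0 := mul_neg_of_pos_of_neg (by linarith) h
      linarith [le_max_right C 0]
    have hfloor : n / 2 ≤ ⌊n⌋₊ := by
      rcases lt_or_ge n 2 with h | h
      · have : (1 : ℝ) ≤ ⌊n⌋₊ := by exact_mod_cast Nat.le_floor (by exact_mod_cast hn1)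
        linarith
      · linarith [Nat.lt_floor_add_one n]
    refine ⟨hw0, ?_⟩
    calc C ≤ max C 0 := le_max_left C 0
      _ ≤ n / 2 * w (2 * n) := by linarith
      _ ≤ ⌊n⌋₊ * w (2 * n) := mul_le_mul_of_nonneg_right hfloor hw0
  obtain ⟨T₁, hT₁⟩ := eventually_atTop.1 hrec
  filter_upwards [hlarge, eventually_ge_atTop (max T₁ T), eventually_gt_atTop 0]
    with n ⟨hw0, hC⟩ hn hn0
  have hS4n : 0 ≤ S (4 * n) := hS0 _ (by linarith [le_max_right T₁ T])
  calc C * S (4 * n) ≤ ⌊n⌋₊ * w (2 * n) * S (4 * n) := mul_le_mul_of_nonneg_right hC hS4n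
    _ = ⌊n⌋₊ * (w (2 * n) * S (4 * n)) := mul_assoc _ _ _
    _ ≤ S n := natFloor_mul_le_of_delay_recurrence hanti hS0 hw hn0
        (le_of_max_le_right hn) hw0 fun t ht => hT₁ t (by linarith [le_max_left T₁ T, ht.1])

end DelayRecurrence

theorem le_of_le_on_Icc_of_map_mul_le {f : ℝ → ℝ} {N r C : ℝ} (hN : 0 < N) (hr : 1 < r)
    (hbase : ∀ t ∈ Icc N (r * N), f t ≤ C) (hstep : ∀ t, N ≤ t → f (r * t) ≤ f t)
    {t : ℝ} (ht : N ≤ t) : f t ≤ C := by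
  have hr0 : 0 < r := one_pos.trans hr
  have hscales : ∀ k : ℕ, ∀ t ∈ Icc N (r ^ k * N), f t ≤ C := by
    intro k
    induction k with
    | zero => exact fun t ht => hbase t ⟨ht.1, by nlinarith [ht.2]⟩
    | succ k ih =>
      intro t ⟨hNt, htk⟩
      rcases le_or_gt t (r * N) with h | h
      · exact hbase t ⟨hNt, h⟩
      · have hdiv : N ≤ t / r := (le_div_iff₀ hr0).2 (by linarith)
        have hdivk : t / r ≤ r ^ k * N := (div_le_iff₀ hr0).2 (by rw [pow_succ] at htk; linarith)
        calc f t = f (r * (t / r)) := by rw [mul_div_cancel₀ t hr0.ne']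
          _ ≤ f (t / r) := hstep _ hdiv
          _ ≤ C := ih _ ⟨hdiv, hdivk⟩
  obtain ⟨k, hk⟩ := pow_unbounded_of_one_lt (t / N) hr
  exact hscales k t ⟨ht, ((div_lt_iff₀ hN).1 hk).le⟩

section ScaleRatio

variable {S : ℝ → ℝ} {T r : ℝ}

theorem isBigO_rpow_neg_of_forall_eventually_mul_le (hr : 1 < r) (hanti : AntitoneOn S (Ici T))
    (hS0 : ∀ t, T ≤ t → 0 ≤ S t) (hratio : ∀ C : ℝ, ∀ᶠ t in atTop, C * S (r * t) ≤ S t)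
    {β : ℝ} (hβ : 0 ≤ β) : S =O[atTop] fun t => t ^ (-β) := by
  have hr0 : 0 < r := one_pos.trans hr
  obtain ⟨N₁, hN₁⟩ := eventually_atTop.1 (hratio (r ^ β))
  set N := max (max N₁ T) 1
  have hN1 : N₁ ≤ N := (le_max_left _ _).trans (le_max_left _ _)
  have hNT : T ≤ N := (le_max_right _ _).trans (le_max_left _ _)
  have hN0 : 0 < N := one_pos.trans_le (le_max_right _ _)
  have hbound : ∀ t, N ≤ t → S t * t ^ β ≤ S N * (r * N) ^ β := by
    refine fun t ht => le_of_le_on_Icc_of_map_mul_le (f := fun t => S t * t ^ β) hN0 hr ?_ ?_ ht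
    · intro s ⟨hNs, hsr⟩
      exact mul_le_mul (hanti (mem_Ici.2 hNT) (mem_Ici.2 (hNT.trans hNs)) hNs)
        (rpow_le_rpow (by linarith) hsr hβ) (rpow_nonneg (by linarith) _) (hS0 N hNT)
    · intro s hs
      have hs0 : 0 ≤ s := by linarith
      calc S (r * s) * (r * s) ^ β = r ^ β * S (r * s) * s ^ β := by
            rw [mul_rpow hr0.le hs0]; ring
        _ ≤ S s * s ^ β :=
            mul_le_mul_of_nonneg_right (hN₁ s (hN1.trans hs)) (by positivity)
  refine IsBigO.of_bound (S N * (r * N) ^ β) ?_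
  filter_upwards [eventually_ge_atTop N] with t ht
  have ht0 : 0 < t := hN0.trans_le ht
  rw [norm_of_nonneg (hS0 t (hNT.trans ht)), norm_of_nonneg (by positivity), rpow_neg ht0.le,
    le_mul_inv_iff₀ (by positivity)]
  exact hbound t ht

theorem isLittleO_rpow_neg_rpow_neg {β γ : ℝ} (h : β < γ) :
    (fun t : ℝ => t ^ (-γ)) =o[atTop] fun t => t ^ (-β) := by
  have hsmall : (fun t : ℝ => t ^ (-(γ - β))) =o[atTop] fun _ => (1 : ℝ) :=
    (isLittleO_one_iff ℝ).2 (tendsto_rpow_neg_atTop (sub_pos.2 h))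
  refine (hsmall.mul_isBigO (isBigO_refl (fun t : ℝ => t ^ (-β)) atTop)).congr' ?_ (by simp)
  filter_upwards [eventually_gt_atTop 0] with t ht
  rw [← rpow_add ht]
  ring_nf

theorem isLittleO_rpow_neg_of_forall_eventually_mul_le (hr : 1 < r)
    (hanti : AntitoneOn S (Ici T)) (hS0 : ∀ t, T ≤ t → 0 ≤ S t)
    (hratio : ∀ C : ℝ, ∀ᶠ t in atTop, C * S (r * t) ≤ S t) (β : ℝ) :
    S =o[atTop] fun t => t ^ (-β) :=
  (isBigO_rpow_neg_of_forall_eventually_mul_le hr hanti hS0 hratio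
    (by positivity : 0 ≤ max β 0 + 1)).trans_isLittleO
    (isLittleO_rpow_neg_rpow_neg (by linarith [le_max_left β 0]))

end ScaleRatio

theorem rpow_mul_log_eq_rpow_mul_log {q t : ℝ} (hq : 0 < q) (ht : 0 < t) (a : ℝ) :
    q ^ (a * log t) = t ^ (a * log q) := by
  rw [rpow_def_of_pos hq, rpow_def_of_pos ht]
  ring_nf

theorem const_mul_rpow_neg_le_rpow_log_add {q t : ℝ} (hq : 0 < q) (ht : 1 ≤ t) (a b : ℝ) :
    q ^ b * t ^ (-max (a * log (1 / q)) 0) ≤ q ^ (a * log t + b) := by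
  rw [rpow_add hq, rpow_mul_log_eq_rpow_mul_log hq (one_pos.trans_le ht), mul_comm,
    one_div, log_inv]
  gcongr
  rw [mul_neg]
  exact neg_le.2 (le_max_left _ _)

theorem tendsto_mul_const_mul_rpow_neg_atTop {c γ : ℝ} (hc : 0 < c) (hγ : γ < 1) :
    Tendsto (fun t => t * (c * t ^ (-γ))) atTop atTop := by
  refine ((tendsto_rpow_atTop (sub_pos.2 hγ)).const_mul_atTop hc).congr' ?_
  filter_upwards [eventually_gt_atTop 0] with t ht
  rw [sub_eq_add_neg, rpow_add ht, rpow_one]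
  ring

theorem eventually_sub_log_delay_mem (a b T : ℝ) :
    ∀ᶠ t in atTop, T ≤ t - (a * log t + b) - 1 ∧ t - (a * log t + b) - 1 ≤ 2 * t := by
  have hsmall : (fun t => a * log t + b) =o[atTop] id :=
    (isLittleO_log_id_atTop.const_mul_left a).add (isLittleO_const_id_atTop b)
  filter_upwards [hsmall.bound (by norm_num : (0 : ℝ) < 1 / 2),
    eventually_ge_atTop (2 * T + 2), eventually_ge_atTop 0] with t hbound hT ht0
  rw [norm_eq_abs, id, norm_of_nonneg ht0, abs_le] at hbound
  constructor <;> linarith [hbound.1, hbound.2]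

theorem stmt19 (q a b T₀ : ℝ) (hq0 : 0 < q) (hq1 : q < 1)
    (ha : a < 1 / Real.log (1 / q))
    (xT : ℝ → ℝ) (hxT : ∀ t : ℝ, xT t = a * Real.log t + b)
    (S : ℝ → ℝ)
    (hpos : ∀ t : ℝ, T₀ ≤ t → 0 < S t)
    (hanti : AntitoneOn S (Ici T₀))
    (hrec : ∀ᶠ t : ℝ in atTop,
      S t ≤ S (t - 1) - q ^ xT t * (1 - q) * S (t - xT t - 1)) :
    ∀ β : ℝ, 0 < β → (fun t : ℝ => S t) =o[atTop] fun t : ℝ => t ^ (-β) := by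
  intro β _
  -- clipping at `0` makes the weight `t ^ (-γ)` antitone, and for `t ≥ 1` only shrinks it
  set γ := max (a * log (1 / q)) 0
  have hγ1 : γ < 1 := max_lt ((lt_div_iff₀ (log_pos (one_lt_one_div hq0 hq1))).1 ha) one_pos
  have hc : 0 < (1 - q) * q ^ b := mul_pos (sub_pos.2 hq1) (rpow_pos_of_pos hq0 b)
  have hS0 : ∀ t, T₀ ≤ t → 0 ≤ S t := fun t ht => (hpos t ht).le
  have hweighted : ∀ᶠ t in atTop,
      S t + (1 - q) * q ^ b * t ^ (-γ) * S (2 * t) ≤ S (t - 1) := by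
    filter_upwards [hrec, eventually_sub_log_delay_mem a b T₀, eventually_ge_atTop 1]
      with t hrec_t ⟨hdelay_T₀, hdelay_2t⟩ ht
    rw [hxT] at hrec_t
    have hweight : (1 - q) * q ^ b * t ^ (-γ) ≤ q ^ (a * log t + b) * (1 - q) := by
      rw [mul_assoc, mul_comm]
      exact mul_le_mul_of_nonneg_right (const_mul_rpow_neg_le_rpow_log_add hq0 ht a b)
        (sub_pos.2 hq1).le
    have hdelay : S (2 * t) ≤ S (t - (a * log t + b) - 1) :=
      hanti (mem_Ici.2 hdelay_T₀) (mem_Ici.2 (hdelay_T₀.trans hdelay_2t)) hdelay_2t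
    have := mul_le_mul hweight hdelay (hS0 _ (hdelay_T₀.trans hdelay_2t))
      (mul_pos (rpow_pos_of_pos hq0 _) (sub_pos.2 hq1)).le
    linarith
  have hw : AntitoneOn (fun t => (1 - q) * q ^ b * t ^ (-γ)) (Ioi 0) := fun s hs t _ hst =>
    mul_le_mul_of_nonneg_left (rpow_le_rpow_of_nonpos hs hst (neg_nonpos.2 (le_max_right _ _)))
      hc.le
  exact isLittleO_rpow_neg_of_forall_eventually_mul_le (by norm_num) hanti hS0
    (forall_eventually_mul_le_of_delay_recurrence hanti hS0 hw
      (tendsto_mul_const_mul_rpow_neg_atTop hc hγ1) hweighted) β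
end
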